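/- Every linear Lagrangian relation L on V can be written as L = Γ_γ ∘ E_{V₀}, where V₀ = p₁(L), E_{V₀} = {(v,w) : v ∈ V₀, w − v ∈ V₀^⊥}, and γ is an isometry of V. -/

import Mathlib

open Module Submodule

variable {V : Type} [AddCommGroup V] [Module ℂ V]

/-- The form `B((v,w),(v',w')) = ⟨v|v'⟩ − ⟨w|w'⟩` on `V × V`. -/
noncomputable def BB (b : LinearMap.BilinForm ℂ V) : LinearMap.BilinForm ℂ (V × V) :=
  LinearMap.mk₂ ℂ (fun p q => b p.1 q.1 - b p.2 q.2)
    (by intros; simp; ring)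
    (by intros; simp; ring)
    (by intros; simp; ring)
    (by intros; simp; ring)

/-- A linear relation `L ⊆ V × V` is isotropic if `B` vanishes on it. -/
def IsIsotropicRel (b : LinearMap.BilinForm ℂ V) (L : Submodule ℂ (V × V)) : Prop :=
  ∀ p ∈ L, ∀ q ∈ L, BB b p q = 0

/-- A linear Lagrangian relation: an isotropic subspace of `V × V` of dimension `dim V`. -/
def IsLagrangianRel [FiniteDimensional ℂ V] (b : LinearMap.BilinForm ℂ V)
    (L : Submodule ℂ (V × V)) : Prop :=
  IsIsotropicRel b L ∧ finrank ℂ L = finrank ℂ V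

/-- Composition of linear relations: `rcomp L L' = L' ∘ L = {(x,z) | ∃ y, (x,y) ∈ L, (y,z) ∈ L'}`. -/
def rcomp (L L' : Submodule ℂ (V × V)) : Submodule ℂ (V × V) where
  carrier := {p | ∃ y, (p.1, y) ∈ L ∧ (y, p.2) ∈ L'}
  add_mem' := fun ⟨y, h1, h2⟩ ⟨y', h1', h2'⟩ => ⟨y + y', L.add_mem h1 h1', L'.add_mem h2 h2'⟩
  zero_mem' := ⟨0, L.zero_mem, L'.zero_mem⟩
  smul_mem' := fun c p ⟨y, h1, h2⟩ => ⟨c • y, L.smul_mem c h1, L'.smul_mem c h2⟩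

/-- The idempotent relation `E_{V₀} = {(v, v+w) : v ∈ V₀, w ∈ V₀^⊥}` of a
coisotropic subspace `V₀`. -/
noncomputable def Esub {V : Type} [AddCommGroup V] [Module ℂ V]
    (b : LinearMap.BilinForm ℂ V) (V₀ : Submodule ℂ V) : Submodule ℂ (V × V) :=
  Submodule.comap (LinearMap.fst ℂ V V) V₀ ⊓
    Submodule.comap (LinearMap.snd ℂ V V - LinearMap.fst ℂ V V) (b.orthogonal V₀)


/-!
Put `V₀ = p₁(L)` and `K₁ = {w | (0, w) ∈ L}`. A Lagrangian relation is its own orthogonal for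
`b ⊕ (-b)`, so `V₀^⊥ ⊆ {v | (v, 0) ∈ L} ⊆ V₀`, and rank–nullity for `p₁` gives
`dim K₁ = dim V₀^⊥`. Split `V₀ = V₀^⊥ ⊕ C`: the form is nondegenerate on `C`, and a linear
section `s : C → V` of `L` is an isometric embedding. It remains to extend `s` to an isometry
`γ` of `V` with `γ(V₀^⊥) = K₁`. In `C^⊥` and `s(C)^⊥` the subspaces `V₀^⊥` and `K₁` are
Lagrangian of equal dimension, and any two such pairs are isometric: a Lagrangian `N` has an
isotropic complement, which identifies the space with the hyperbolic model `N* × N`. Gluing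
this isometry with `s` along the orthogonal decompositions gives `γ`.
-/

namespace LinearMap.BilinForm

variable {K W W' : Type*} [Field K] [AddCommGroup W] [Module K W] [AddCommGroup W'] [Module K W']
  {β : LinearMap.BilinForm K W} {β' : LinearMap.BilinForm K W'}

theorem injective_of_isometry (hβ : β.Nondegenerate) {f : W →ₗ[K] W'}
    (hf : ∀ x y, β' (f x) (f y) = β x y) : Function.Injective f :=
  (injective_iff_map_eq_zero f).2 fun x hx => hβ.1 x fun y => by
    rw [← hf, hx, map_zero, LinearMap.zero_apply]

theorem nondegenerate_restrict_range_of_isometry (hβ : β.Nondegenerate) (hβ' : β'.IsRefl)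
    {f : W →ₗ[K] W'} (hf : ∀ x y, β' (f x) (f y) = β x y) :
    (β'.restrict (range f)).Nondegenerate := by
  refine β'.nondegenerate_restrict_of_disjoint_orthogonal hβ' ?_
  rw [Submodule.disjoint_def]
  rintro _ ⟨w, rfl⟩ hw
  rw [hβ.2 w fun y => by rw [← hf]; exact hw _ ⟨y, rfl⟩, map_zero]

theorem nondegenerate_restrict_of_orthogonal_sup_eq (hβ : β.IsRefl) {U C : Submodule K W}
    (hdisj : Disjoint (β.orthogonal U) C) (hsup : β.orthogonal U ⊔ C = U) :
    (β.restrict C).Nondegenerate := by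
  refine β.nondegenerate_restrict_of_disjoint_orthogonal hβ ?_
  rw [Submodule.disjoint_def]
  intro x hxC hx
  have hxU : x ∈ β.orthogonal U := by
    intro u hu
    obtain ⟨o, ho, c, hc, rfl⟩ := mem_sup.1 (hsup ▸ hu)
    rw [add_left, hx c hc, hβ _ _ (ho x (hsup ▸ mem_sup_right hxC)), add_zero]
  exact disjoint_def.1 hdisj x hxU hxC

theorem nondegenerate_restrict_orthogonal [FiniteDimensional K W] (hβ : β.Nondegenerate)
    (hr : β.IsRefl) {C : Submodule K W} (hC : (β.restrict C).Nondegenerate) :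
    (β.restrict (β.orthogonal C)).Nondegenerate := by
  refine β.nondegenerate_restrict_of_disjoint_orthogonal hr ?_
  rw [orthogonal_orthogonal hβ hr]
  exact (isCompl_orthogonal_of_restrict_nondegenerate hr hC).symm.disjoint

theorem apply_add_add_of_mem_orthogonal (hβ : β.IsRefl) {C : Submodule K W} {c c' w w' : W}
    (hc : c ∈ C) (hc' : c' ∈ C) (hw : w ∈ β.orthogonal C) (hw' : w' ∈ β.orthogonal C) :
    β (c + w) (c' + w') = β c c' + β w w' := by
  rw [add_left, add_right, add_right, hw' c hc, hβ _ _ (hw c' hc')]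
  ring

theorem exists_isometryEquiv_of_orthogonal_sum [FiniteDimensional K W]
    [FiniteDimensional K W'] (hβ : β.IsRefl) (hβ' : β'.IsRefl) {C : Submodule K W}
    {D : Submodule K W'} (hC : (β.restrict C).Nondegenerate) (hD : (β'.restrict D).Nondegenerate)
    (φ : C ≃ₗ[K] D) (hφ : ∀ x y : C, β' (φ x) (φ y) = β x y)
    (ψ : β.orthogonal C ≃ₗ[K] β'.orthogonal D)
    (hψ : ∀ x y : β.orthogonal C, β' (ψ x) (ψ y) = β x y) :
    ∃ γ : W ≃ₗ[K] W', (∀ x y, β' (γ x) (γ y) = β x y) ∧ (∀ c : C, γ c = φ c) ∧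
      ∀ w : β.orthogonal C, γ w = ψ w := by
  have hCC := isCompl_orthogonal_of_restrict_nondegenerate hβ hC
  have hDD := isCompl_orthogonal_of_restrict_nondegenerate hβ' hD
  let γ := (prodEquivOfIsCompl _ _ hCC).symm ≪≫ₗ φ.prodCongr ψ ≪≫ₗ prodEquivOfIsCompl _ _ hDD
  have hγ (c : C) (w : β.orthogonal C) : γ (c + w) = φ c + ψ w := by
    have : (prodEquivOfIsCompl _ _ hCC).symm (c + w) = (c, w) :=
      (LinearEquiv.symm_apply_eq _).2 (coe_prodEquivOfIsCompl' _ _ hCC (c, w)).symm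
    simp [γ, this]
  refine ⟨γ, fun x y => ?_, fun c => by simpa using hγ c 0, fun w => by simpa using hγ 0 w⟩
  obtain ⟨⟨c, w⟩, rfl⟩ := (prodEquivOfIsCompl _ _ hCC).surjective x
  obtain ⟨⟨c', w'⟩, rfl⟩ := (prodEquivOfIsCompl _ _ hCC).surjective y
  simp only [coe_prodEquivOfIsCompl', hγ]
  rw [apply_add_add_of_mem_orthogonal hβ' (φ c).2 (φ c').2 (ψ w).2 (ψ w').2,
    apply_add_add_of_mem_orthogonal hβ c.2 c'.2 w.2 w'.2, hφ, hψ]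

theorem orthogonal_eq_of_le_orthogonal [FiniteDimensional K W] (hβ : β.Nondegenerate)
    {N : Submodule K W} (hN : N ≤ β.orthogonal N) (hdim : 2 * finrank K N = finrank K W) :
    β.orthogonal N = N :=
  (eq_of_le_of_finrank_eq hN (by rw [finrank_orthogonal hβ]; omega)).symm

theorem exists_isCompl_le_orthogonal [FiniteDimensional K W] (h2 : (2 : K) ≠ 0) (hs : β.IsSymm)
    (hβ : β.Nondegenerate) {N : Submodule K W} (hN : N ≤ β.orthogonal N)
    (hdim : 2 * finrank K N = finrank K W) : ∃ A, IsCompl N A ∧ A ≤ β.orthogonal A := by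
  obtain ⟨A₀, hA₀⟩ := N.exists_isCompl
  have hrank := Submodule.finrank_add_eq_of_isCompl hA₀
  let P : N →ₗ[K] Dual K A₀ := A₀.subtype.dualMap ∘ₗ β ∘ₗ N.subtype
  have hP : Function.Injective P := by
    refine (injective_iff_map_eq_zero P).2 fun n hn => Subtype.ext (hβ.1 n fun w => ?_)
    obtain ⟨m, hm, a, ha, rfl⟩ := mem_sup.1 (hA₀.sup_eq_top ▸ mem_top : w ∈ N ⊔ A₀)
    rw [map_add, hN hm n n.2, zero_add]
    exact DFunLike.congr_fun hn ⟨a, ha⟩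
  let Pe := P.linearEquivOfInjective hP (by rw [Subspace.dual_finrank_eq]; omega)
  -- shearing `A₀` along `N` by `a ↦ a + T a` makes it isotropic
  let T : A₀ →ₗ[K] N := Pe.symm ∘ₗ (-(2 : K)⁻¹ • (A₀.subtype.dualMap ∘ₗ β ∘ₗ A₀.subtype))
  have hT (a a' : A₀) : β (T a) a' = -(2 : K)⁻¹ * β a a' :=
    DFunLike.congr_fun (Pe.apply_symm_apply _) a'
  let g : A₀ →ₗ[K] W := A₀.subtype + N.subtype ∘ₗ T
  refine ⟨range g, IsCompl.of_eq ?_ ?_, ?_⟩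
  · refine eq_bot_iff.2 fun x ⟨hxN, a, hax⟩ => ?_
    have ha : (a : W) ∈ N ⊓ A₀ := ⟨by simpa [← hax, g] using N.sub_mem hxN (T a).2, a.2⟩
    rw [hA₀.inf_eq_bot, mem_bot, ZeroMemClass.coe_eq_zero] at ha
    simp [← hax, g, ha]
  · refine eq_top_iff.2 (hA₀.sup_eq_top ▸ sup_le le_sup_left fun a ha => ?_)
    have : a = g ⟨a, ha⟩ - T ⟨a, ha⟩ := by simp [g]
    exact this ▸ sub_mem (mem_sup_right ⟨_, rfl⟩) (mem_sup_left (T _).2)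
  · rintro _ ⟨a, rfl⟩ _ ⟨a', rfl⟩
    have hhalf : (2 : K)⁻¹ + 2⁻¹ = 1 := by rw [← two_mul, mul_inv_cancel₀ h2]
    simp only [g, LinearMap.add_apply, coe_comp, Function.comp_apply, subtype_apply, add_left,
      add_right, hN (T a).2 _ (T a').2, hT, hs.eq (a' : W) (T a)]
    linear_combination (-(β a' a)) * hhalf - (2 : K)⁻¹ * hs.eq (a : W) a'

theorem exists_isometryEquiv_dualProd [FiniteDimensional K W] (h2 : (2 : K) ≠ 0)
    (hs : β.IsSymm) (hβ : β.Nondegenerate) {N : Submodule K W} (hN : N ≤ β.orthogonal N)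
    (hdim : 2 * finrank K N = finrank K W) :
    ∃ ψ : W ≃ₗ[K] Dual K N × N, (∀ x y, dualProd K N (ψ x) (ψ y) = β x y) ∧
      ∀ x, (ψ x).1 = 0 ↔ x ∈ N := by
  obtain ⟨A, hNA, hA⟩ := exists_isCompl_le_orthogonal h2 hs hβ hN hdim
  let f : W →ₗ[K] Dual K N × N := (N.subtype.dualMap ∘ₗ β).prod (N.projectionOnto A hNA)
  have hf (x y : W) : dualProd K N (f x) (f y) = β x y := by
    obtain ⟨n, hn, a, ha, rfl⟩ := mem_sup.1 (hNA.sup_eq_top ▸ mem_top : x ∈ N ⊔ A)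
    obtain ⟨n', hn', a', ha', rfl⟩ := mem_sup.1 (hNA.sup_eq_top ▸ mem_top : y ∈ N ⊔ A)
    simp [f, projectionOnto_apply_of_mem_left hNA, projectionOnto_apply_of_mem_right hNA, hn, hn',
      ha, ha', hN hn _ hn', hN hn' _ hn, hA ha' _ ha, hs.eq a' n]
  let ψ := f.linearEquivOfInjective (injective_of_isometry hβ hf)
    (by rw [finrank_prod, Subspace.dual_finrank_eq]; omega)
  refine ⟨ψ, hf, fun x => ?_⟩
  have hxN : x ∈ N ↔ ∀ n ∈ N, β n x = 0 := by
    rw [← mem_orthogonal_iff, orthogonal_eq_of_le_orthogonal hβ hN hdim]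
  simp [hxN, ψ, f, LinearMap.ext_iff, hs.eq x]

theorem exists_isometryEquiv_of_lagrangian [FiniteDimensional K W] [FiniteDimensional K W']
    (h2 : (2 : K) ≠ 0) (hs : β.IsSymm) (hs' : β'.IsSymm) (hβ : β.Nondegenerate)
    (hβ' : β'.Nondegenerate) {N : Submodule K W} {N' : Submodule K W'}
    (hN : N ≤ β.orthogonal N) (hN' : N' ≤ β'.orthogonal N')
    (hdim : 2 * finrank K N = finrank K W) (hdim' : 2 * finrank K N' = finrank K W')
    (hNN' : finrank K N = finrank K N') :
    ∃ γ : W ≃ₗ[K] W', (∀ x y, β' (γ x) (γ y) = β x y) ∧ ∀ x, γ x ∈ N' ↔ x ∈ N := by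
  obtain ⟨ψ, hψ, hψN⟩ := exists_isometryEquiv_dualProd h2 hs hβ hN hdim
  obtain ⟨ψ', hψ', hψN'⟩ := exists_isometryEquiv_dualProd h2 hs' hβ' hN' hdim'
  let e := LinearEquiv.ofFinrankEq N N' hNN'
  let γ := ψ ≪≫ₗ e.symm.dualMap.prodCongr e ≪≫ₗ ψ'.symm
  refine ⟨γ, fun x y => ?_, fun x => ?_⟩
  · rw [← hψ', ← hψ]
    simp [γ]
  · rw [← hψN', ← hψN]
    simp [γ]

theorem exists_isometryEquiv_extend [FiniteDimensional K W] (h2 : (2 : K) ≠ 0) (hs : β.IsSymm)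
    (hβ : β.Nondegenerate) {C : Submodule K W} (hC : (β.restrict C).Nondegenerate)
    (f : C →ₗ[K] W) (hf : ∀ x y : C, β (f x) (f y) = β x y) {N N' : Submodule K W}
    (hNC : N ≤ β.orthogonal C) (hN'f : N' ≤ β.orthogonal (range f))
    (hN : N ≤ β.orthogonal N) (hN' : N' ≤ β.orthogonal N')
    (hdim : 2 * finrank K N = finrank K (β.orthogonal C)) (hNN' : finrank K N' = finrank K N) :
    ∃ γ : W ≃ₗ[K] W, (∀ x y, β (γ x) (γ y) = β x y) ∧ (∀ c : C, γ c = f c) ∧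
      ∀ x, γ x ∈ N' ↔ x ∈ N := by
  have hinj := injective_of_isometry hC hf
  have hD := nondegenerate_restrict_range_of_isometry hC hs.isRefl hf
  set W₀ := β.orthogonal C
  set W₁ := β.orthogonal (range f)
  have hW : finrank K W₀ = finrank K W₁ := by
    simp only [W₀, W₁, finrank_orthogonal hβ, finrank_range_of_inj hinj]
  have hsymm (U : Submodule K W) : (β.restrict U).IsSymm := ⟨fun x y => hs.eq x y⟩
  obtain ⟨ψ, hψ, hψN⟩ := exists_isometryEquiv_of_lagrangian h2 (hsymm W₀) (hsymm W₁)
    (nondegenerate_restrict_orthogonal hβ hs.isRefl hC)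
    (nondegenerate_restrict_orthogonal hβ hs.isRefl hD)
    (N := N.comap W₀.subtype) (N' := N'.comap W₁.subtype)
    (fun x hx y hy => hN hx y hy) (fun x hx y hy => hN' hx y hy)
    (by rw [(comapSubtypeEquivOfLe hNC).finrank_eq, hdim])
    (by rw [(comapSubtypeEquivOfLe hN'f).finrank_eq, ← hW, hNN', hdim])
    (by rw [(comapSubtypeEquivOfLe hNC).finrank_eq, (comapSubtypeEquivOfLe hN'f).finrank_eq,
      hNN'])
  obtain ⟨γ, hγ, hγC, hγW₀⟩ := exists_isometryEquiv_of_orthogonal_sum hs.isRefl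
    hs.isRefl hC hD (LinearEquiv.ofInjective f hinj) hf ψ hψ
  refine ⟨γ, hγ, hγC, ?_⟩
  have hmap : N.map (γ : W →ₗ[K] W) = N' := by
    refine eq_of_le_of_finrank_eq ?_ (by rw [LinearEquiv.finrank_map_eq, hNN'])
    rintro _ ⟨x, hx, rfl⟩
    simpa [hγW₀ ⟨x, hNC hx⟩] using (hψN ⟨x, hNC hx⟩).2 hx
  intro x
  rw [← hmap, mem_map_equiv, LinearEquiv.symm_apply_apply]

end LinearMap.BilinForm

section LinearRelation

variable {K M N : Type*} [Field K] [AddCommGroup M] [Module K M] [AddCommGroup N] [Module K N]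

theorem finrank_map_fst_add_finrank_comap_inr [FiniteDimensional K M] [FiniteDimensional K N]
    (L : Submodule K (M × N)) :
    finrank K (L.map (LinearMap.fst K M N)) + finrank K (L.comap (LinearMap.inr K M N)) =
      finrank K L := by
  let j : L.comap (LinearMap.inr K M N) →ₗ[K] L := (LinearMap.inr K M N).restrict fun _ hw => hw
  have hj : Function.Injective j := fun _ _ h => Subtype.ext (congrArg (fun p : L => p.1.2) h)
  have hrange : LinearMap.range j = LinearMap.ker ((LinearMap.fst K M N).domRestrict L) := by
    ext ⟨⟨x, y⟩, hp⟩
    simp only [LinearMap.mem_range, LinearMap.mem_ker, LinearMap.domRestrict_apply,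
      LinearMap.fst_apply]
    constructor
    · rintro ⟨w, hw⟩
      exact congrArg (fun p : L => p.1.1) hw.symm
    · rintro rfl
      exact ⟨⟨y, hp⟩, rfl⟩
  rw [← LinearMap.finrank_range_of_inj hj, hrange, ← LinearMap.range_domRestrict,
    LinearMap.finrank_range_add_finrank_ker]

theorem exists_section_of_le_map_fst {L : Submodule K (M × N)} {C : Submodule K M}
    (hC : C ≤ L.map (LinearMap.fst K M N)) : ∃ s : C →ₗ[K] N, ∀ c : C, ((c : M), s c) ∈ L := by
  let g := ((LinearMap.fst K M N).domRestrict L).rangeRestrict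
  obtain ⟨h, hh⟩ := Module.projective_lifting_property g
    (inclusion (hC.trans_eq (LinearMap.range_domRestrict L _).symm))
    (LinearMap.surjective_rangeRestrict _)
  refine ⟨LinearMap.snd K M N ∘ₗ L.subtype ∘ₗ h, fun c => ?_⟩
  have hfst : (h c : M × N).1 = c := congrArg Subtype.val (LinearMap.congr_fun hh c)
  have hpair : (h c : M × N) = ((c : M), LinearMap.snd K M N (h c)) := Prod.ext hfst rfl
  exact hpair ▸ (h c).2

end LinearRelation

theorem IsIsotropicRel.apply_fst_eq_apply_snd {b : LinearMap.BilinForm ℂ V}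
    {L : Submodule ℂ (V × V)} (hL : IsIsotropicRel b L) {p q : V × V} (hp : p ∈ L) (hq : q ∈ L) :
    b p.1 q.1 = b p.2 q.2 :=
  sub_eq_zero.1 (hL p hp q hq)

theorem nondegenerate_BB {b : LinearMap.BilinForm ℂ V} (hb : b.Nondegenerate) :
    (BB b).Nondegenerate :=
  ⟨fun p hp => Prod.ext (hb.1 _ fun x => by simpa [BB] using hp (x, 0))
      (hb.1 _ fun x => by simpa [BB] using hp (0, x)),
    fun q hq => Prod.ext (hb.2 _ fun x => by simpa [BB] using hq (x, 0))
      (hb.2 _ fun x => by simpa [BB] using hq (0, x))⟩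

theorem IsLagrangianRel.orthogonal_eq [FiniteDimensional ℂ V] {b : LinearMap.BilinForm ℂ V}
    (hb : b.Nondegenerate) {L : Submodule ℂ (V × V)} (hL : IsLagrangianRel b L) :
    (BB b).orthogonal L = L :=
  LinearMap.BilinForm.orthogonal_eq_of_le_orthogonal (nondegenerate_BB hb)
    (fun q hq p hp => hL.1 p hp q hq) (by rw [hL.2, finrank_prod]; ring)

theorem IsLagrangianRel.orthogonal_map_fst_le [FiniteDimensional ℂ V]
    {b : LinearMap.BilinForm ℂ V} (hb : b.Nondegenerate) {L : Submodule ℂ (V × V)}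
    (hL : IsLagrangianRel b L) :
    b.orthogonal (L.map (LinearMap.fst ℂ V V)) ≤ L.comap (LinearMap.inl ℂ V V) := by
  intro v hv
  rw [mem_comap, ← hL.orthogonal_eq hb]
  intro p hp
  simpa [BB] using hv p.1 ⟨p, hp, rfl⟩

theorem IsLagrangianRel.exists_isometry_section [FiniteDimensional ℂ V]
    {b : LinearMap.BilinForm ℂ V} (hs : b.IsSymm) (hb : b.Nondegenerate)
    {L : Submodule ℂ (V × V)} (hL : IsLagrangianRel b L) :
    ∃ γ : V ≃ₗ[ℂ] V, (∀ x y, b (γ x) (γ y) = b x y) ∧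
      (∀ v ∈ L.map (LinearMap.fst ℂ V V), (v, γ v) ∈ L) ∧
      ∀ w, ((0 : V), γ w) ∈ L ↔ w ∈ b.orthogonal (L.map (LinearMap.fst ℂ V V)) := by
  set V₀ := L.map (LinearMap.fst ℂ V V)
  have hO₀ := hL.orthogonal_map_fst_le hb
  have hO₀V₀ : b.orthogonal V₀ ≤ V₀ := fun v hv => ⟨(v, 0), hO₀ hv, rfl⟩
  obtain ⟨C, hdisj, hsup⟩ := IsModularLattice.exists_disjoint_and_sup_eq hO₀V₀
  have hCV₀ : C ≤ V₀ := hsup ▸ le_sup_right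
  obtain ⟨s, hsL⟩ := exists_section_of_le_map_fst hCV₀
  have hdimC : finrank ℂ (b.orthogonal V₀) + finrank ℂ C = finrank ℂ V₀ := by
    rw [← finrank_sup_add_finrank_inf_eq, hsup, hdisj.eq_bot, finrank_bot, add_zero]
  have hdimK : finrank ℂ V₀ + finrank ℂ (L.comap (LinearMap.inr ℂ V V)) = finrank ℂ V :=
    hL.2 ▸ finrank_map_fst_add_finrank_comap_inr L
  have hdimO₀ := LinearMap.BilinForm.finrank_orthogonal hb V₀
  have hdimOC := LinearMap.BilinForm.finrank_orthogonal hb C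
  have hdimV₀ := finrank_le V₀
  obtain ⟨γ, hγ, hγC, hγN⟩ := LinearMap.BilinForm.exists_isometryEquiv_extend two_ne_zero hs hb
    (LinearMap.BilinForm.nondegenerate_restrict_of_orthogonal_sup_eq hs.isRefl hdisj hsup) s
    (fun x y => (hL.1.apply_fst_eq_apply_snd (hsL x) (hsL y)).symm)
    (N' := L.comap (LinearMap.inr ℂ V V)) (LinearMap.BilinForm.orthogonal_le hCV₀)
    (by rintro w hw _ ⟨c, rfl⟩; simpa using (hL.1.apply_fst_eq_apply_snd (hsL c) hw).symm)
    (LinearMap.BilinForm.orthogonal_le hO₀V₀)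
    (fun w hw w' hw' => by simpa using (hL.1.apply_fst_eq_apply_snd hw' hw).symm)
    (by omega) (by omega)
  refine ⟨γ, hγ, fun v hv => ?_, hγN⟩
  obtain ⟨o, ho, c, hc, rfl⟩ := mem_sup.1 (hsup ▸ hv)
  have hoL : (o, (0 : V)) ∈ L := hO₀ ho
  have hγoL : ((0 : V), γ o) ∈ L := (hγN o).2 ho
  simpa [← hγC ⟨c, hc⟩, add_comm] using add_mem (add_mem hoL (hsL ⟨c, hc⟩)) hγoL

theorem eq_rcomp_Esub_graph {b : LinearMap.BilinForm ℂ V} {L : Submodule ℂ (V × V)}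
    (γ : V ≃ₗ[ℂ] V) (hsec : ∀ v ∈ L.map (LinearMap.fst ℂ V V), (v, γ v) ∈ L)
    (hker : ∀ w, ((0 : V), γ w) ∈ L ↔ w ∈ b.orthogonal (L.map (LinearMap.fst ℂ V V))) :
    L = rcomp (Esub b (L.map (LinearMap.fst ℂ V V))) (LinearMap.graph (γ : V →ₗ[ℂ] V)) := by
  ext ⟨x, z⟩
  constructor
  · intro hxz
    have hx : x ∈ L.map (LinearMap.fst ℂ V V) := ⟨_, hxz, rfl⟩
    set w := γ.symm (z - γ x)
    have hw := (hker w).1 (by simpa [w] using sub_mem hxz (hsec x hx))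
    refine ⟨x + w, ⟨hx, by simpa using hw⟩, ?_⟩
    simp [w]
  · rintro ⟨y, ⟨hx, hyx⟩, hz⟩
    obtain rfl : z = γ y := (LinearMap.mem_graph_iff _ _).1 hz
    simpa using add_mem (hsec x hx) ((hker (y - x)).2 hyx)

/-- Every linear Lagrangian relation decomposes as `L = Γ_γ ∘ E_{V₀}` with
`V₀ = p₁(L)` and `γ` an isometry of `V`. -/
theorem stmt11 {V : Type} [AddCommGroup V] [Module ℂ V] [FiniteDimensional ℂ V]
    (b : LinearMap.BilinForm ℂ V) (hsymm : b.IsSymm) (hnd : b.Nondegenerate)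
    (L : Submodule ℂ (V × V)) (hL : IsLagrangianRel b L) :
    ∃ γ : V ≃ₗ[ℂ] V, (∀ x y : V, b (γ x) (γ y) = b x y) ∧
      L = rcomp (Esub b (Submodule.map (LinearMap.fst ℂ V V) L))
            (LinearMap.graph (γ : V →ₗ[ℂ] V)) := by
  obtain ⟨γ, hγ, hsec, hker⟩ := hL.exists_isometry_section hsymm hnd
  exact ⟨γ, hγ, eq_rcomp_Esub_graph γ hsec hker⟩
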